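/- Let L : ℝ^d → ℝ be differentiable, L∞-smooth with respect to the ℓ∞ norm, and bounded below with infimum L*. Let θ ∈ (0,1). On a probability space, let (x_k) be random vectors with x_0 deterministic and x_{k+1} = x_k − η_k·sign(g_k), where the deterministic learning rates η_k > 0 satisfy ∑_{k=0}^∞ η_k = ∞ and ∑_{k=0}^∞ η_k² < ∞, and each g_k is integrable, conditionally unbiased E[g_k ∣ x_0, …, x_k] = ∇L(x_k), and satisfies E[‖g_k − ∇L(x_k)‖₁ ∣ x_0, …, x_k] ≤ θ·‖∇L(x_k)‖₁ almost surely. Then liminf_{k→∞} E[‖∇L(x_k)‖₁] = 0. -/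

import Mathlib

open MeasureTheory Filter

/-- The ℓ1 norm on `ℝ^d`. -/
def l1norm {d : ℕ} (v : EuclideanSpace ℝ (Fin d)) : ℝ := ∑ i, |v i|

/-- The ℓ∞ norm on `ℝ^d`. -/
noncomputable def linfnorm {d : ℕ} (v : EuclideanSpace ℝ (Fin d)) : ℝ := ⨆ i, |v i|

/-- The coordinatewise sign map on `ℝ^d`. -/
noncomputable def signVec {d : ℕ} (v : EuclideanSpace ℝ (Fin d)) : EuclideanSpace ℝ (Fin d) :=
  WithLp.toLp 2 (fun i => Real.sign (v i))

/-- The σ-algebra generated by the random vectors `x 0, …, x k`. -/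
def genBy {Ω : Type*} {d : ℕ} (x : ℕ → Ω → EuclideanSpace ℝ (Fin d)) (k : ℕ) :
    MeasurableSpace Ω :=
  ⨆ i ∈ Finset.range (k + 1), MeasurableSpace.comap (x i) inferInstance

/-!
ℓ∞-smoothness gives the descent inequality `L (x + v) ≤ L x + ⟪∇L x, v⟫ + L∞ ‖v‖∞²`, and for a
sign step `v = -η sign g` one has `⟪∇L x, sign g⟫ ≥ ‖g‖₁ - ‖g - ∇L x‖₁`. In expectation,
conditional Jensen and unbiasedness give `E‖g_k‖₁ ≥ E‖∇L(x_k)‖₁`, while the relative-noise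
condition bounds `E‖g_k - ∇L(x_k)‖₁` by `θ E‖∇L(x_k)‖₁`, so
`E L(x_{k+1}) ≤ E L(x_k) - (1 - θ) η_k E‖∇L(x_k)‖₁ + L∞ η_k²`. Telescoping against `L*` makes
`∑ η_k E‖∇L(x_k)‖₁` finite, which together with `∑ η_k = ∞` forces the liminf to vanish.
-/

open scoped RealInnerProductSpace

section Norms

variable {d : ℕ}

theorem l1norm_nonneg (v : EuclideanSpace ℝ (Fin d)) : 0 ≤ l1norm v :=
  Finset.sum_nonneg fun _ _ => abs_nonneg _

theorem linfnorm_nonneg (v : EuclideanSpace ℝ (Fin d)) : 0 ≤ linfnorm v :=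
  Real.iSup_nonneg fun _ => abs_nonneg _

theorem abs_apply_le_linfnorm (v : EuclideanSpace ℝ (Fin d)) (i : Fin d) : |v i| ≤ linfnorm v :=
  le_ciSup (f := fun j => |v j|) (Finite.bddAbove_range _) i

theorem linfnorm_smul (t : ℝ) (v : EuclideanSpace ℝ (Fin d)) :
    linfnorm (t • v) = |t| * linfnorm v := by
  simp only [linfnorm, Real.mul_iSup_of_nonneg (abs_nonneg t), PiLp.smul_apply, smul_eq_mul,
    abs_mul]

theorem linfnorm_signVec_le_one (v : EuclideanSpace ℝ (Fin d)) : linfnorm (signVec v) ≤ 1 :=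
  Real.iSup_le (fun i => by rcases Real.sign_apply_eq (v i) with h | h | h <;> simp [signVec, h])
    zero_le_one

theorem abs_inner_le_l1norm_mul_linfnorm (u v : EuclideanSpace ℝ (Fin d)) :
    |⟪u, v⟫| ≤ l1norm u * linfnorm v := by
  rw [PiLp.inner_apply, l1norm, Finset.sum_mul]
  refine (Finset.abs_sum_le_sum_abs _ _).trans (Finset.sum_le_sum fun i _ => ?_)
  rw [RCLike.inner_apply, conj_trivial, abs_mul, mul_comm]
  exact mul_le_mul_of_nonneg_left (abs_apply_le_linfnorm v i) (abs_nonneg _)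

theorem abs_sub_abs_sub_le_mul_sign (a b : ℝ) : |a| - |a - b| ≤ b * Real.sign a := by
  rcases lt_trichotomy a 0 with h | rfl | h
  · rw [Real.sign_of_neg h, abs_of_neg h]
    linarith [neg_abs_le (a - b)]
  · simp
  · rw [Real.sign_of_pos h, abs_of_pos h]
    linarith [le_abs_self (a - b)]

theorem l1norm_sub_l1norm_sub_le_inner_signVec (w v : EuclideanSpace ℝ (Fin d)) :
    l1norm v - l1norm (v - w) ≤ ⟪w, signVec v⟫ := by
  rw [l1norm, l1norm, ← Finset.sum_sub_distrib, PiLp.inner_apply]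
  refine Finset.sum_le_sum fun i _ => ?_
  simpa [signVec, mul_comm] using abs_sub_abs_sub_le_mul_sign (v i) (w i)

end Norms

section Descent

variable {d : ℕ} {L : EuclideanSpace ℝ (Fin d) → ℝ} {Linf : ℝ}

theorem hasDerivAt_comp_add_smul (hL : Differentiable ℝ L) (x v : EuclideanSpace ℝ (Fin d))
    (t : ℝ) : HasDerivAt (fun s : ℝ => L (x + s • v)) ⟪gradient L (x + t • v), v⟫ t := by
  have hline : HasDerivAt (fun s : ℝ => x + s • v) v t := by
    simpa using ((hasDerivAt_id t).smul_const v).const_add x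
  rw [gradient, InnerProductSpace.toDual_symm_apply]
  exact (hL _).hasFDerivAt.comp_hasDerivAt t hline

theorem le_add_inner_gradient_add_linfnorm_sq (hL : Differentiable ℝ L) (hLinf : 0 ≤ Linf)
    (hsmooth : ∀ x y, l1norm (gradient L x - gradient L y) ≤ Linf * linfnorm (x - y))
    (x v : EuclideanSpace ℝ (Fin d)) :
    L (x + v) ≤ L x + ⟪gradient L x, v⟫ + Linf * linfnorm v ^ 2 := by
  have hderiv : ∀ t, HasDerivAt (fun t => L (x + t • v) - t * ⟪gradient L x, v⟫)
      ⟪gradient L (x + t • v) - gradient L x, v⟫ t := fun t => by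
    rw [inner_sub_left]
    exact (hasDerivAt_comp_add_smul hL x v t).sub (hasDerivAt_mul_const _)
  have hbound : ∀ t ∈ Set.Ico (0 : ℝ) 1,
      ‖⟪gradient L (x + t • v) - gradient L x, v⟫‖ ≤ Linf * linfnorm v ^ 2 := by
    intro t ht
    calc ‖⟪gradient L (x + t • v) - gradient L x, v⟫‖
        ≤ l1norm (gradient L (x + t • v) - gradient L x) * linfnorm v :=
          abs_inner_le_l1norm_mul_linfnorm _ _
      _ ≤ Linf * linfnorm (t • v) * linfnorm v := by
          gcongr
          · exact linfnorm_nonneg v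
          · simpa using hsmooth (x + t • v) x
      _ ≤ Linf * linfnorm v ^ 2 := by
          rw [linfnorm_smul, abs_of_nonneg ht.1]
          nlinarith [mul_nonneg hLinf (sq_nonneg (linfnorm v)), ht.2]
  have := norm_image_sub_le_of_norm_deriv_le_segment_01'
    (fun t _ => (hderiv t).hasDerivWithinAt) hbound
  simp only [one_smul, zero_smul, add_zero, one_mul, zero_mul, sub_zero, Real.norm_eq_abs] at this
  linarith [le_abs_self (L (x + v) - ⟪gradient L x, v⟫ - L x)]

theorem le_sub_mul_add_of_signVec_step {η : ℝ} (hL : Differentiable ℝ L) (hLinf : 0 ≤ Linf)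
    (hsmooth : ∀ x y, l1norm (gradient L x - gradient L y) ≤ Linf * linfnorm (x - y))
    (hη : 0 ≤ η) (x g : EuclideanSpace ℝ (Fin d)) :
    L (x - η • signVec g) ≤ L x - η * (l1norm g - l1norm (g - gradient L x)) + Linf * η ^ 2 := by
  have hdesc := le_add_inner_gradient_add_linfnorm_sq hL hLinf hsmooth x (-(η • signVec g))
  have hstep : linfnorm (-(η • signVec g)) ^ 2 ≤ η ^ 2 := by
    rw [← neg_smul, linfnorm_smul, abs_neg, abs_of_nonneg hη]
    exact pow_le_pow_left₀ (mul_nonneg hη (linfnorm_nonneg _))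
      (mul_le_of_le_one_right hη (linfnorm_signVec_le_one g)) 2
  have hsign := mul_le_mul_of_nonneg_left
    (l1norm_sub_l1norm_sub_le_inner_signVec (gradient L x) g) hη
  rw [← sub_eq_add_neg, inner_neg_right, inner_smul_right] at hdesc
  nlinarith [mul_le_mul_of_nonneg_left hstep hLinf]

end Descent

theorem genBy_le {Ω : Type*} [MeasurableSpace Ω] {d : ℕ} {x : ℕ → Ω → EuclideanSpace ℝ (Fin d)}
    (hx : ∀ k, Measurable (x k)) (k : ℕ) : genBy x k ≤ ‹MeasurableSpace Ω› :=
  iSup₂_le fun i _ => (hx i).comap_le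

section Expectation

variable {d : ℕ} {Ω : Type*} {m m₀ : MeasurableSpace Ω} {μ : Measure[m₀] Ω}
  {f : Ω → EuclideanSpace ℝ (Fin d)}

theorem MeasureTheory.Integrable.l1norm (hf : Integrable f μ) :
    Integrable (fun ω => l1norm (f ω)) μ :=
  integrable_finsetSum _ fun i _ => ((EuclideanSpace.proj (𝕜 := ℝ) i).integrable_comp hf).abs

theorem integral_l1norm (hf : Integrable f μ) :
    ∫ ω, l1norm (f ω) ∂μ = ∑ i, ∫ ω, |f ω i| ∂μ :=
  integral_finsetSum _ fun i _ => ((EuclideanSpace.proj (𝕜 := ℝ) i).integrable_comp hf).abs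

theorem integral_l1norm_condExp_le (hf : Integrable f μ) :
    ∫ ω, l1norm ((μ[f | m]) ω) ∂μ ≤ ∫ ω, l1norm (f ω) ∂μ := by
  rw [integral_l1norm integrable_condExp, integral_l1norm hf]
  refine Finset.sum_le_sum fun i _ => ?_
  calc ∫ ω, |(μ[f | m]) ω i| ∂μ = ∫ ω, |(μ[fun ω => f ω i | m]) ω| ∂μ :=
        integral_congr_ae <| ((EuclideanSpace.proj (𝕜 := ℝ) i).comp_condExp_comm hf).mono
          fun ω hω => congrArg abs hω
    _ ≤ ∫ ω, |f ω i| ∂μ := integral_abs_condExp_le _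

end Expectation

section SignStep

variable {d : ℕ} {L : EuclideanSpace ℝ (Fin d) → ℝ} {Linf θ η : ℝ}
  {Ω : Type*} {m m₀ : MeasurableSpace Ω} {μ : Measure[m₀] Ω} [IsProbabilityMeasure μ]
  {X G : Ω → EuclideanSpace ℝ (Fin d)}

theorem integrable_signVec_step_bound (hLX : Integrable (fun ω => L (X ω)) μ)
    (hG : Integrable G μ) (hgrad : Integrable (fun ω => gradient L (X ω)) μ) :
    Integrable (fun ω => L (X ω) - η * (l1norm (G ω) - l1norm (G ω - gradient L (X ω)))
      + Linf * η ^ 2) μ :=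
  (hLX.sub ((hG.l1norm.sub (hG.sub hgrad).l1norm).const_mul η)).add (integrable_const _)

theorem integrable_comp_sub_smul_signVec {Lstar : ℝ} (hL : Differentiable ℝ L) (hLinf : 0 ≤ Linf)
    (hsmooth : ∀ x y, l1norm (gradient L x - gradient L y) ≤ Linf * linfnorm (x - y))
    (hη : 0 ≤ η) (hLb : ∀ y, Lstar ≤ L y)
    (hmeas : AEStronglyMeasurable (fun ω => L (X ω - η • signVec (G ω))) μ)
    (hLX : Integrable (fun ω => L (X ω)) μ) (hG : Integrable G μ)
    (hgrad : Integrable (fun ω => gradient L (X ω)) μ) :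
    Integrable (fun ω => L (X ω - η • signVec (G ω))) μ :=
  integrable_of_le_of_le hmeas (ae_of_all _ fun _ => hLb _)
    (ae_of_all _ fun ω => le_sub_mul_add_of_signVec_step hL hLinf hsmooth hη (X ω) (G ω))
    (integrable_const Lstar) (integrable_signVec_step_bound hLX hG hgrad)

theorem integral_comp_sub_smul_signVec_le (hL : Differentiable ℝ L) (hLinf : 0 ≤ Linf)
    (hsmooth : ∀ x y, l1norm (gradient L x - gradient L y) ≤ Linf * linfnorm (x - y))
    (hη : 0 ≤ η) (hm : m ≤ m₀)
    (hunbiased : μ[G | m] =ᵐ[μ] fun ω => gradient L (X ω))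
    (hnoise : ∀ᵐ ω ∂μ, (μ[fun ω' => l1norm (G ω' - gradient L (X ω')) | m]) ω
      ≤ θ * l1norm (gradient L (X ω)))
    (hLX' : Integrable (fun ω => L (X ω - η • signVec (G ω))) μ)
    (hLX : Integrable (fun ω => L (X ω)) μ) (hG : Integrable G μ) :
    ∫ ω, L (X ω - η • signVec (G ω)) ∂μ ≤ ∫ ω, L (X ω) ∂μ
      - (1 - θ) * η * ∫ ω, l1norm (gradient L (X ω)) ∂μ + Linf * η ^ 2 := by
  have hgrad : Integrable (fun ω => gradient L (X ω)) μ := integrable_condExp.congr hunbiased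
  have hjensen : ∫ ω, l1norm (gradient L (X ω)) ∂μ ≤ ∫ ω, l1norm (G ω) ∂μ :=
    calc ∫ ω, l1norm (gradient L (X ω)) ∂μ = ∫ ω, l1norm ((μ[G | m]) ω) ∂μ :=
          integral_congr_ae (hunbiased.fun_comp l1norm).symm
      _ ≤ ∫ ω, l1norm (G ω) ∂μ := integral_l1norm_condExp_le hG
  have hnoise_int : ∫ ω, l1norm (G ω - gradient L (X ω)) ∂μ
      ≤ θ * ∫ ω, l1norm (gradient L (X ω)) ∂μ :=
    calc ∫ ω, l1norm (G ω - gradient L (X ω)) ∂μ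
        = ∫ ω, (μ[fun ω' => l1norm (G ω' - gradient L (X ω')) | m]) ω ∂μ :=
          (integral_condExp hm).symm
      _ ≤ ∫ ω, θ * l1norm (gradient L (X ω)) ∂μ :=
          integral_mono_ae integrable_condExp (hgrad.l1norm.const_mul θ) hnoise
      _ = θ * ∫ ω, l1norm (gradient L (X ω)) ∂μ := integral_const_mul _ _
  have hstep := integral_mono hLX' (integrable_signVec_step_bound (Linf := Linf) hLX hG hgrad)
    fun ω => le_sub_mul_add_of_signVec_step hL hLinf hsmooth hη (X ω) (G ω)
  have hnoise_l1 : Integrable (fun ω => l1norm (G ω - gradient L (X ω))) μ := (hG.sub hgrad).l1norm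
  have hdrift : Integrable (fun ω => η * (l1norm (G ω) - l1norm (G ω - gradient L (X ω)))) μ :=
    (hG.l1norm.sub hnoise_l1).const_mul η
  have hfirst : Integrable (fun ω => L (X ω)
      - η * (l1norm (G ω) - l1norm (G ω - gradient L (X ω)))) μ := hLX.sub hdrift
  rw [integral_add hfirst (integrable_const _), integral_sub hLX hdrift, integral_const_mul,
    integral_sub hG.l1norm hnoise_l1] at hstep
  simp only [integral_const, probReal_univ, one_smul] at hstep
  nlinarith [mul_le_mul_of_nonneg_left (add_le_add hjensen hnoise_int) hη]

end SignStep

theorem summable_of_succ_le_sub_add {u c e : ℕ → ℝ} {b : ℝ} (hc : ∀ k, 0 ≤ c k)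
    (he : ∀ k, 0 ≤ e k) (he_sum : Summable e) (hu : ∀ k, b ≤ u k)
    (hstep : ∀ k, u (k + 1) ≤ u k - c k + e k) : Summable c := by
  have htele : ∀ n, u n + ∑ k ∈ Finset.range n, c k ≤ u 0 + ∑ k ∈ Finset.range n, e k := by
    intro n
    induction n with
    | zero => simp
    | succ n ih =>
      rw [Finset.sum_range_succ, Finset.sum_range_succ]
      linarith [hstep n]
  refine summable_of_sum_range_le (c := u 0 - b + ∑' k, e k) hc fun n => ?_
  linarith [htele n, hu n, he_sum.sum_le_tsum (Finset.range n) fun k _ => he k]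

theorem liminf_eq_zero_of_summable_mul {a η : ℕ → ℝ} (ha : ∀ k, 0 ≤ a k) (hη : ∀ k, 0 ≤ η k)
    (hη_div : ¬Summable η) (hsum : Summable fun k => η k * a k) : liminf a atTop = 0 := by
  have hfreq : ∀ ε > 0, ∃ᶠ k in atTop, a k ≤ ε := by
    intro ε hε
    by_contra hlarge
    refine hη_div (.of_norm_bounded_eventually_nat (hsum.div_const ε) ?_)
    filter_upwards [not_frequently.mp hlarge] with k hk
    rw [Real.norm_of_nonneg (hη k), le_div_iff₀ hε]
    exact mul_le_mul_of_nonneg_left (not_le.mp hk).le (hη k)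
  have hbdd : IsBoundedUnder (· ≥ ·) atTop a := isBoundedUnder_of ⟨0, ha⟩
  refine le_antisymm (le_of_forall_pos_le_add fun ε hε => ?_)
    (le_liminf_of_le (.of_frequently_le (hfreq 1 one_pos)) (.of_forall ha))
  simpa using liminf_le_of_frequently_le (hfreq ε hε) hbdd

/-- SignSGD with adaptive batch sizes and learning rates satisfying `∑ η_k = ∞`,
`∑ η_k² < ∞`: `liminf_{k→∞} E[‖∇L(x_k)‖₁] = 0`. -/
theorem stmt8 {d : ℕ} (L : EuclideanSpace ℝ (Fin d) → ℝ) (hL : Differentiable ℝ L)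
    (Linf : ℝ) (hLinf_pos : 0 < Linf)
    (hsmooth : ∀ x y, l1norm (gradient L x - gradient L y) ≤ Linf * linfnorm (x - y))
    (Lstar : ℝ) (hinf : IsGLB (Set.range L) Lstar)
    (θ : ℝ) (hθ : θ ∈ Set.Ioo (0 : ℝ) 1)
    (η : ℕ → ℝ) (hη_pos : ∀ k, 0 < η k)
    (hη_div : Tendsto (fun n => ∑ k ∈ Finset.range n, η k) atTop atTop)
    (hη_sq : Summable fun k => (η k) ^ 2)
    {Ω : Type*} [MeasurableSpace Ω] (μ : Measure Ω) [IsProbabilityMeasure μ]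
    (x : ℕ → Ω → EuclideanSpace ℝ (Fin d)) (g : ℕ → Ω → EuclideanSpace ℝ (Fin d))
    (x₀ : EuclideanSpace ℝ (Fin d)) (hx0 : ∀ ω, x 0 ω = x₀)
    (hxmeas : ∀ k, Measurable (x k))
    (hg_int : ∀ k, Integrable (g k) μ)
    (hupdate : ∀ k ω, x (k + 1) ω = x k ω - η k • signVec (g k ω))
    (hunbiased : ∀ k, μ[g k | genBy x k] =ᵐ[μ] fun ω => gradient L (x k ω))
    (hnoise : ∀ k, ∀ᵐ ω ∂μ,
      (μ[fun ω' => l1norm (g k ω' - gradient L (x k ω')) | genBy x k]) ω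
        ≤ θ * l1norm (gradient L (x k ω))) :
    liminf (fun k => ∫ ω, l1norm (gradient L (x k ω)) ∂μ) atTop = 0 := by
  have hgrad : ∀ k, Integrable (fun ω => gradient L (x k ω)) μ := fun k =>
    integrable_condExp.congr (hunbiased k)
  have hLb : ∀ y, Lstar ≤ L y := fun y => hinf.1 ⟨y, rfl⟩
  have hLx : ∀ k, Integrable (fun ω => L (x k ω)) μ := by
    intro k
    induction k with
    | zero => simp only [hx0]; exact integrable_const _
    | succ k ih =>
      have hmeas := (hL.continuous.measurable.comp (hxmeas (k + 1))).aestronglyMeasurable (μ := μ)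
      simp only [Function.comp_def, hupdate] at hmeas ⊢
      exact integrable_comp_sub_smul_signVec hL hLinf_pos.le hsmooth (hη_pos k).le hLb hmeas ih
        (hg_int k) (hgrad k)
  have hdescent : ∀ k, ∫ ω, L (x (k + 1) ω) ∂μ ≤ ∫ ω, L (x k ω) ∂μ
      - (1 - θ) * η k * ∫ ω, l1norm (gradient L (x k ω)) ∂μ + Linf * η k ^ 2 := fun k => by
    have hLx' := hLx (k + 1)
    simp only [hupdate] at hLx' ⊢
    exact integral_comp_sub_smul_signVec_le hL hLinf_pos.le hsmooth (hη_pos k).le (genBy_le hxmeas k)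
      (hunbiased k) (hnoise k) hLx' (hLx k) (hg_int k)
  have hθ1 : 0 < 1 - θ := sub_pos.2 hθ.2
  have hsum : Summable fun k => (1 - θ) * η k * ∫ ω, l1norm (gradient L (x k ω)) ∂μ :=
    summable_of_succ_le_sub_add
      (fun k => mul_nonneg (mul_pos hθ1 (hη_pos k)).le (integral_nonneg fun _ => l1norm_nonneg _))
      (fun k => mul_nonneg hLinf_pos.le (sq_nonneg _)) (hη_sq.mul_left Linf)
      (fun k => by simpa using integral_mono (integrable_const Lstar) (hLx k) fun _ => hLb _)
      hdescent
  refine liminf_eq_zero_of_summable_mul (fun k => integral_nonneg fun _ => l1norm_nonneg _)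
    (fun k => (mul_pos hθ1 (hη_pos k)).le) ?_ hsum
  rw [summable_mul_left_iff hθ1.ne', not_summable_iff_tendsto_nat_atTop_of_nonneg
    fun k => (hη_pos k).le]
  exact hη_div
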